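/- Define superoperators 𝒜(ρ) = (A*ρ + ρ*A)/2, 𝒝(ρ) = (B*ρ + ρ*B)/2, 𝒞(ρ) = (C*ρ + ρ*C)/2 on n×n complex matrices. Then for any density matrix ρ, Tr(ρ * 𝒜(𝒝(𝒞(1)))) - Tr(ρ * 𝒝(𝒜(𝒞(1)))) = Tr(ρ * [[A,B],C]) / 4. -/

import Mathlib

/-! Since `𝒞(1) = C`, the claim is about the operator `𝒜𝒝 - 𝒝𝒜` applied to `C`; expanding,
the terms `ACB` and `BCA` cancel and `ABC + CBA - BAC - CAB = [[A,B],C]` remains, with the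
factor `1/4` from the two halvings. -/

section HalfAnticomm

variable (K : Type*) {R : Type*} [Field K] [Ring R] [Algebra K R]

def halfAnticomm (M σ : R) : R := (1 / 2 : K) • (M * σ + σ * M)

variable {K}

theorem halfAnticomm_one (h2 : (2 : K) ≠ 0) (M : R) : halfAnticomm K M (1 : R) = M := by
  rw [halfAnticomm, mul_one, one_mul, ← two_smul K M, smul_smul, one_div,
    inv_mul_cancel₀ h2, one_smul]

theorem anticomm_sub_anticomm (A B C : R) :
    A * (B * C + C * B) + (B * C + C * B) * A - (B * (A * C + C * A) + (A * C + C * A) * B) =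
      ⁅⁅A, B⁆, C⁆ := by
  simp only [Ring.lie_def]
  noncomm_ring

theorem halfAnticomm_sub_halfAnticomm (A B C : R) :
    halfAnticomm K A (halfAnticomm K B C) - halfAnticomm K B (halfAnticomm K A C) =
      (1 / 4 : K) • ⁅⁅A, B⁆, C⁆ := by
  have hquarter : (1 / 2 : K) * (1 / 2) = 1 / 4 := by rw [div_mul_div_comm]; norm_num
  simp only [halfAnticomm, mul_smul_comm, smul_mul_assoc, ← smul_add, ← smul_sub, smul_smul,
    hquarter, anticomm_sub_anticomm]

end HalfAnticomm

open ComplexOrder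

theorem weak_measurement_time_order
    {n : ℕ} (A B C ρ : Matrix (Fin n) (Fin n) ℂ) :
    (let sop : Matrix (Fin n) (Fin n) ℂ → Matrix (Fin n) (Fin n) ℂ →
        Matrix (Fin n) (Fin n) ℂ := fun M σ => (1/2 : ℂ) • (M * σ + σ * M);
     (ρ * sop A (sop B (sop C 1))).trace - (ρ * sop B (sop A (sop C 1))).trace)
      = (ρ * ((A * B - B * A) * C - C * (A * B - B * A))).trace / 4 := by
  change (ρ * halfAnticomm ℂ A (halfAnticomm ℂ B (halfAnticomm ℂ C 1))).trace
      - (ρ * halfAnticomm ℂ B (halfAnticomm ℂ A (halfAnticomm ℂ C 1))).trace = _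
  rw [halfAnticomm_one two_ne_zero, ← Matrix.trace_sub, ← Matrix.mul_sub,
    halfAnticomm_sub_halfAnticomm, Matrix.mul_smul, Matrix.trace_smul, smul_eq_mul,
    Ring.lie_def, Ring.lie_def]
  ring
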